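/- Let G be a finite simple connected undirected graph on n ≥ 2 vertices whose normalized Laplacian 𝓛 has eigenvalues 0 = λ₀ < λ₁ ≤ … ≤ λ_{n−1} ≤ 2, and for η ∈ [0,1) define g(η) = max_{i=1,…,n−1} |η + (1−η)(1 − λᵢ)|. If ς := (λ₁ + λ_{n−1})/2 > 1, then for every η ∈ [0,1) one has g(η) ≥ g(η*) = 1 − λ₁/ς = (λ_{n−1} − λ₁)/(λ_{n−1} + λ₁), where η* = 1 − ς⁻¹. -/
import Mathlib


lemma stmt10_aux {ι : Type*} {S : Finset ι} (hS : S.Nonempty) (lam : ι → ℝ)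
    (i1 iN : ι) (h1 : i1 ∈ S) (hN : iN ∈ S)
    (hlo : ∀ i ∈ S, lam i1 ≤ lam i) (hhi : ∀ i ∈ S, lam i ≤ lam iN)
    (ha : 0 < lam i1) (hs : 2 < lam i1 + lam iN) :
    (∀ η ∈ Set.Ico (0:ℝ) 1,
        (lam iN - lam i1) / (lam iN + lam i1)
          ≤ S.sup' hS fun i => |η + (1 - η) * (1 - lam i)|)
    ∧ (S.sup' hS fun i =>
        |(1 - ((lam i1 + lam iN)/2)⁻¹) + (1 - (1 - ((lam i1 + lam iN)/2)⁻¹)) * (1 - lam i)|)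
        = (lam iN - lam i1) / (lam iN + lam i1) := by
  set a := lam i1 with ha_def
  set b := lam iN with hb_def
  have hab : a ≤ b := hhi i1 h1
  have hspos : (0:ℝ) < a + b := by linarith
  have hbpos : (0:ℝ) < b := lt_of_lt_of_le ha hab
  have hne : a + b ≠ 0 := ne_of_gt hspos
  constructor
  · rintro η ⟨hη0, hη1⟩
    by_cases hc : 1 - η ≤ 2 / (a + b)
    · -- use i1
      have hb1 : (b - a) / (b + a) ≤ |η + (1 - η) * (1 - a)| := by
        have key : (b - a) / (b + a) ≤ η + (1 - η) * (1 - a) := by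
          rw [div_le_iff₀ (by linarith)]
          have ht : (1 - η) * (a + b) ≤ 2 := by
            rw [← le_div_iff₀ hspos]; exact hc
          nlinarith [mul_le_mul_of_nonneg_left ht ha.le]
        exact key.trans (le_abs_self _)
      exact hb1.trans (Finset.le_sup' (fun i => |η + (1 - η) * (1 - lam i)|) h1)
    · -- use iN
      push_neg at hc
      have hb1 : (b - a) / (b + a) ≤ |η + (1 - η) * (1 - b)| := by
        have key : (b - a) / (b + a) ≤ -(η + (1 - η) * (1 - b)) := by
          rw [div_le_iff₀ (by linarith)]
          have ht : 2 < (1 - η) * (a + b) := by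
            rw [← div_lt_iff₀ hspos]; exact hc
          nlinarith [mul_lt_mul_of_pos_left ht hbpos]
        exact key.trans (neg_le_abs _)
      exact hb1.trans (Finset.le_sup' (fun i => |η + (1 - η) * (1 - lam i)|) hN)
  · apply le_antisymm
    · apply Finset.sup'_le
      intro i hi
      have hlo' := hlo i hi
      have hhi' := hhi i hi
      have heq : (1 - ((a + b)/2)⁻¹) + (1 - (1 - ((a + b)/2)⁻¹)) * (1 - lam i)
          = ((a + b) - 2 * lam i) / (a + b) := by
        field_simp
        ring
      rw [heq, abs_div, abs_of_pos hspos, div_le_div_iff₀ hspos (by linarith)]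
      have habs : |(a + b) - 2 * lam i| ≤ b - a := by
        rw [abs_le]; constructor <;> linarith
      nlinarith [abs_nonneg ((a + b) - 2 * lam i)]
    · have heq : (1 - ((a + b)/2)⁻¹) + (1 - (1 - ((a + b)/2)⁻¹)) * (1 - a)
          = (b - a) / (a + b) := by
        field_simp
        ring
      have : (b - a) / (b + a) ≤ |(1 - ((a + b)/2)⁻¹) + (1 - (1 - ((a + b)/2)⁻¹)) * (1 - a)| := by
        rw [heq]
        rw [abs_of_nonneg (div_nonneg (by linarith) hspos.le)]
        rw [add_comm b a]
      exact this.trans (Finset.le_sup' (fun i => |(1 - ((a + b)/2)⁻¹) + (1 - (1 - ((a + b)/2)⁻¹)) * (1 - lam i)|) h1)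

/-- Let `G` be a finite simple connected graph on `n ≥ 2` vertices whose
normalized Laplacian `𝓛 = I - D^{-1/2} A D^{-1/2}` has eigenvalues (listed with multiplicity
in increasing order, via a diagonalization) `0 = λ₀ < λ₁ ≤ … ≤ λ_{n-1} ≤ 2`, and for
`η ∈ [0,1)` let `g(η) = max_{i=1,…,n-1} |η + (1-η)(1-λᵢ)|`. If `ς = (λ₁ + λ_{n-1})/2 > 1`,
then for every `η ∈ [0,1)` one has `g(η) ≥ g(η*) = 1 - λ₁/ς = (λ_{n-1}-λ₁)/(λ_{n-1}+λ₁)`,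
where `η* = 1 - ς⁻¹`. -/
theorem stmt_10 {n : ℕ} (hn : 2 ≤ n) (G : SimpleGraph (Fin n)) [DecidableRel G.Adj]
    (hconn : G.Connected)
    (lam : Fin n → ℝ) (hmono : Monotone lam)
    (hlam0 : lam ⟨0, by omega⟩ = 0) (hlam1 : 0 < lam ⟨1, by omega⟩)
    (hlamtop : lam ⟨n - 1, by omega⟩ ≤ 2)
    (hdiag : ∃ P : Matrix (Fin n) (Fin n) ℝ, IsUnit P.det ∧
      ((1 : Matrix (Fin n) (Fin n) ℝ)
          - (Matrix.diagonal fun i => (Real.sqrt (G.degree i))⁻¹) * G.adjMatrix ℝ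
              * (Matrix.diagonal fun i => (Real.sqrt (G.degree i))⁻¹)) * P
        = P * Matrix.diagonal lam)
    (g : ℝ → ℝ)
    (hg : ∀ η : ℝ, g η = Finset.sup' (Finset.univ.erase (⟨0, by omega⟩ : Fin n))
      ⟨⟨1, by omega⟩, by simp [Finset.mem_erase, Fin.ext_iff]⟩
      fun i => |η + (1 - η) * (1 - lam i)|)
    (hς : 1 < (lam ⟨1, by omega⟩ + lam ⟨n - 1, by omega⟩) / 2) :
    (∀ η ∈ Set.Ico (0 : ℝ) 1,
        g η ≥ g (1 - ((lam ⟨1, by omega⟩ + lam ⟨n - 1, by omega⟩) / 2)⁻¹))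
    ∧ g (1 - ((lam ⟨1, by omega⟩ + lam ⟨n - 1, by omega⟩) / 2)⁻¹)
        = 1 - lam ⟨1, by omega⟩ / ((lam ⟨1, by omega⟩ + lam ⟨n - 1, by omega⟩) / 2)
    ∧ g (1 - ((lam ⟨1, by omega⟩ + lam ⟨n - 1, by omega⟩) / 2)⁻¹)
        = (lam ⟨n - 1, by omega⟩ - lam ⟨1, by omega⟩)
            / (lam ⟨n - 1, by omega⟩ + lam ⟨1, by omega⟩) := by
  have h1n : 1 < n := by omega
  have h1mem : (⟨1, by omega⟩ : Fin n) ∈ Finset.univ.erase (⟨0, by omega⟩ : Fin n) := by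
    simp [Finset.mem_erase, Fin.ext_iff]
  have hNmem : (⟨n - 1, by omega⟩ : Fin n) ∈ Finset.univ.erase (⟨0, by omega⟩ : Fin n) := by
    simp only [Finset.mem_erase, Finset.mem_univ, and_true, ne_eq, Fin.mk.injEq]
    omega
  have hlo : ∀ i ∈ Finset.univ.erase (⟨0, by omega⟩ : Fin n),
      lam ⟨1, by omega⟩ ≤ lam i := by
    intro i hi
    have hi0 : i ≠ (⟨0, by omega⟩ : Fin n) := (Finset.mem_erase.mp hi).1
    have : (i : ℕ) ≠ 0 := fun h => hi0 (Fin.ext h)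
    exact hmono (by rw [Fin.le_def]; simp only [Fin.val_mk]; omega)
  have hhi : ∀ i ∈ Finset.univ.erase (⟨0, by omega⟩ : Fin n),
      lam i ≤ lam ⟨n - 1, by omega⟩ := by
    intro i _
    have := i.isLt
    exact hmono (by rw [Fin.le_def]; simp only [Fin.val_mk]; omega)
  have hs2 : 2 < lam ⟨1, by omega⟩ + lam ⟨n - 1, by omega⟩ := by linarith
  obtain ⟨hpart1, hpart2⟩ := stmt10_aux
    (⟨⟨1, by omega⟩, h1mem⟩ : (Finset.univ.erase (⟨0, by omega⟩ : Fin n)).Nonempty)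
    lam ⟨1, by omega⟩ ⟨n - 1, by omega⟩ h1mem hNmem hlo hhi hlam1 hs2
  have hgopt : g (1 - ((lam ⟨1, by omega⟩ + lam ⟨n - 1, by omega⟩) / 2)⁻¹)
      = (lam ⟨n - 1, by omega⟩ - lam ⟨1, by omega⟩)
          / (lam ⟨n - 1, by omega⟩ + lam ⟨1, by omega⟩) := by
    rw [hg]; exact hpart2
  refine ⟨?_, ?_, hgopt⟩
  · intro η hη
    rw [ge_iff_le, hgopt, hg]
    exact hpart1 η hη
  · rw [hgopt]
    have hne : lam ⟨n - 1, by omega⟩ + lam ⟨1, by omega⟩ ≠ 0 := by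
      intro h; linarith
    field_simp
    ring
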